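/- As m → 1 from the left, K(m) + log(√(1 − m)) tends to log 4; that is, the complete elliptic integral of the first kind satisfies the asymptotic K(m) = −log√(1−m) + log 4 + o(1) as m → 1⁻. -/

import Mathlib

/-!
Split the integrand as `(1 - sin θ + sin θ) / √(1 - m sin²θ)`. The `sin θ` part has the elementary
antiderivative `-log (√m cos θ + √(1 - m sin²θ)) / √m`, so it equals
`(log (1 + √m) - log √(1 - m)) / √m = -log √(1 - m) + log 2 + o(1)`. The `1 - sin θ` part is
bounded by `1`, so by dominated convergence it tends to
`∫₀^{π/2} (1 - sin θ) / cos θ dθ = ∫₀^{π/2} cos θ / (1 + sin θ) dθ = log 2`.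
-/

open Real

/-- Complete elliptic integral of the first kind `K(m) = ∫₀^{π/2} dθ/√(1 - m sin²θ)`. -/
noncomputable def ellK (m : ℝ) : ℝ :=
  ∫ θ in (0:ℝ)..(π / 2), 1 / Real.sqrt (1 - m * Real.sin θ ^ 2)

/-- Complete elliptic integral of the second kind `E(m) = ∫₀^{π/2} √(1 - m sin²θ) dθ`. -/
noncomputable def ellE (m : ℝ) : ℝ :=
  ∫ θ in (0:ℝ)..(π / 2), Real.sqrt (1 - m * Real.sin θ ^ 2)

open Set Filter MeasureTheory Topology intervalIntegral
open scoped Interval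

lemma one_sub_mul_sin_sq_pos {m : ℝ} (hm : m < 1) (θ : ℝ) : 0 < 1 - m * sin θ ^ 2 := by
  nlinarith [sin_sq_le_one θ, mul_nonneg (sub_nonneg.2 hm.le) (sub_nonneg.2 (sin_sq_le_one θ)),
    mul_nonneg (sub_nonneg.2 hm.le) (sq_nonneg (sin θ))]

lemma continuous_div_sqrt_one_sub_mul_sin_sq {m : ℝ} (hm : m < 1) {g : ℝ → ℝ}
    (hg : Continuous g) : Continuous fun θ => g θ / √(1 - m * sin θ ^ 2) :=
  hg.div (by fun_prop) fun θ => (sqrt_pos.2 (one_sub_mul_sin_sq_pos hm θ)).ne'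

lemma ellK_eq_add {m : ℝ} (hm : m < 1) :
    ellK m = (∫ θ in (0:ℝ)..π / 2, (1 - sin θ) / √(1 - m * sin θ ^ 2))
      + ∫ θ in (0:ℝ)..π / 2, sin θ / √(1 - m * sin θ ^ 2) := by
  rw [ellK, ← integral_add
    ((continuous_div_sqrt_one_sub_mul_sin_sq hm (by fun_prop)).intervalIntegrable _ _)
    ((continuous_div_sqrt_one_sub_mul_sin_sq hm continuous_sin).intervalIntegrable _ _)]
  simp only [← add_div, sub_add_cancel]

lemma hasDerivAt_neg_log_sqrt_mul_cos_add_sqrt_div_sqrt {m θ : ℝ} (hm0 : 0 < m) (hm1 : m < 1)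
    (hθ : 0 ≤ cos θ) :
    HasDerivAt (fun θ => -log (√m * cos θ + √(1 - m * sin θ ^ 2)) / √m)
      (sin θ / √(1 - m * sin θ ^ 2)) θ := by
  have hv := one_sub_mul_sin_sq_pos hm1 θ
  have hu : 0 < √(1 - m * sin θ ^ 2) := sqrt_pos.2 hv
  have hw : 0 < √m * cos θ + √(1 - m * sin θ ^ 2) := by positivity
  have h := ((((hasDerivAt_cos θ).const_mul √m).add
    ((((hasDerivAt_sin θ).pow 2).const_mul m).const_sub 1 |>.sqrt hv.ne')).log hw.ne').neg.div_const √m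
  refine h.congr_deriv ?_
  have hmm : √m ^ 2 = m := sq_sqrt hm0.le
  simp only [Pi.add_apply, Pi.pow_apply]
  generalize √(1 - m * sin θ ^ 2) = u at hu hw ⊢
  field_simp
  push_cast
  linear_combination (-2 * sin θ * cos θ) * hmm

lemma integral_sin_div_sqrt_one_sub_mul_sin_sq {m : ℝ} (hm0 : 0 < m) (hm1 : m < 1) :
    ∫ θ in (0:ℝ)..π / 2, sin θ / √(1 - m * sin θ ^ 2)
      = (log (1 + √m) - log √(1 - m)) / √m := by
  have hderiv : ∀ θ ∈ uIcc 0 (π / 2), HasDerivAt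
      (fun θ => -log (√m * cos θ + √(1 - m * sin θ ^ 2)) / √m)
      (sin θ / √(1 - m * sin θ ^ 2)) θ := fun θ hθ => by
    rw [uIcc_of_le pi_div_two_pos.le] at hθ
    exact hasDerivAt_neg_log_sqrt_mul_cos_add_sqrt_div_sqrt hm0 hm1
      (cos_nonneg_of_mem_Icc ⟨by linarith [hθ.1, pi_pos], hθ.2⟩)
  rw [integral_eq_sub_of_hasDerivAt hderiv
    ((continuous_div_sqrt_one_sub_mul_sin_sq hm1 continuous_sin).intervalIntegrable _ _)]
  norm_num [add_comm]
  ring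

lemma tendsto_integral_sin_div_sqrt_add_log_sqrt :
    Tendsto (fun m => (∫ θ in (0:ℝ)..π / 2, sin θ / √(1 - m * sin θ ^ 2)) + log √(1 - m))
      (𝓝[<] 1) (𝓝 (log 2)) := by
  -- `(1 - 1/√m) log √(1 - m)` rewritten through `x log x`, which is continuous at `0`.
  set g : ℝ → ℝ := fun m =>
    log (1 + √m) / √m - (1 - m) * log (1 - m) / (2 * √m * (1 + √m)) with hg_def
  have hg : ContinuousAt g 1 := by
    have hxlogx : ContinuousAt (fun m : ℝ => (1 - m) * log (1 - m)) 1 :=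
      (continuous_mul_log.comp (continuous_sub_left 1)).continuousAt
    refine ContinuousAt.sub ?_ (hxlogx.div (by fun_prop) (by norm_num))
    exact (ContinuousAt.log (by fun_prop) (by norm_num)).div (by fun_prop) (by norm_num)
  have hg1 : g 1 = log 2 := by norm_num [g]
  rw [← hg1]
  refine (hg.tendsto.mono_left nhdsWithin_le_nhds).congr' ?_
  filter_upwards [Ioo_mem_nhdsLT zero_lt_one] with m ⟨hm0, hm1⟩
  have hmm : √m ^ 2 = m := sq_sqrt hm0.le
  rw [integral_sin_div_sqrt_one_sub_mul_sin_sq hm0 hm1, log_sqrt (by linarith), hg_def]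
  field_simp
  linear_combination (-log (1 - m)) * hmm

-- At `cos θ = 0` both sides are `0` by the convention `x / 0 = 0`.
lemma one_sub_sin_div_sqrt_one_sub_sin_sq {θ : ℝ} (hθ : 0 ≤ cos θ) :
    (1 - sin θ) / √(1 - sin θ ^ 2) = cos θ / (1 + sin θ) := by
  rw [← cos_sq', sqrt_sq hθ]
  rcases hθ.eq_or_lt with hc | hc
  · simp [← hc]
  · have hs : 0 < 1 + sin θ := by nlinarith [sin_sq_add_cos_sq θ]
    rw [div_eq_div_iff hc.ne' hs.ne']
    linear_combination -(sin_sq_add_cos_sq θ)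

lemma one_sub_div_sqrt_one_sub_mul_sq_le_one {m s : ℝ} (hm : m ≤ 1) (hs0 : 0 ≤ s)
    (hs1 : s ≤ 1) : (1 - s) / √(1 - m * s ^ 2) ≤ 1 :=
  div_le_one_of_le₀ (le_sqrt_of_sq_le (by
    nlinarith [mul_nonneg hs0 (sub_nonneg.2 hs1), mul_nonneg (sub_nonneg.2 hm) (sq_nonneg s)]))
    (sqrt_nonneg _)

lemma tendsto_one_sub_div_sqrt_one_sub_mul_sq {s : ℝ} (hs0 : -1 < s) (hs1 : s ≤ 1) :
    Tendsto (fun m => (1 - s) / √(1 - m * s ^ 2)) (𝓝 1) (𝓝 ((1 - s) / √(1 - s ^ 2))) := by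
  rcases hs1.eq_or_lt with rfl | hs1
  · simp
  · have hpos : 0 < 1 - 1 * s ^ 2 := by nlinarith
    have h : ContinuousAt (fun m => (1 - s) / √(1 - m * s ^ 2)) 1 :=
      continuousAt_const.div (by fun_prop) (sqrt_pos.2 hpos).ne'
    simpa using h.tendsto

lemma integral_cos_div_one_add_sin : ∫ θ in (0:ℝ)..π / 2, cos θ / (1 + sin θ) = log 2 := by
  have hsin : ∀ θ ∈ uIcc (0:ℝ) (π / 2), 0 < 1 + sin θ := fun θ hθ => by
    rw [uIcc_of_le pi_div_two_pos.le] at hθ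
    linarith [sin_nonneg_of_nonneg_of_le_pi hθ.1 (by linarith [hθ.2, pi_pos])]
  rw [integral_eq_sub_of_hasDerivAt (f := fun θ => log (1 + sin θ))
    (fun θ hθ => ((hasDerivAt_sin θ).const_add 1).log (hsin θ hθ).ne')
    (ContinuousOn.intervalIntegrable (continuousOn_cos.div (by fun_prop)
      fun θ hθ => (hsin θ hθ).ne'))]
  norm_num

lemma tendsto_integral_one_sub_sin_div_sqrt :
    Tendsto (fun m => ∫ θ in (0:ℝ)..π / 2, (1 - sin θ) / √(1 - m * sin θ ^ 2))
      (𝓝[<] 1) (𝓝 (log 2)) := by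
  have hlim : ∫ θ in (0:ℝ)..π / 2, (1 - sin θ) / √(1 - sin θ ^ 2) = log 2 := by
    rw [← integral_cos_div_one_add_sin]
    refine integral_congr fun θ hθ => one_sub_sin_div_sqrt_one_sub_sin_sq ?_
    rw [uIcc_of_le pi_div_two_pos.le] at hθ
    exact cos_nonneg_of_mem_Icc ⟨by linarith [hθ.1, pi_pos], hθ.2⟩
  have hsin : ∀ θ ∈ Ι (0:ℝ) (π / 2), 0 ≤ sin θ := fun θ hθ => by
    rw [uIoc_of_le pi_div_two_pos.le] at hθ
    exact sin_nonneg_of_nonneg_of_le_pi hθ.1.le (by linarith [hθ.2, pi_pos])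
  rw [← hlim]
  refine tendsto_integral_filter_of_dominated_convergence (fun _ => 1) ?_ ?_
    intervalIntegrable_const (ae_of_all _ fun θ hθ => ?_)
  · filter_upwards [self_mem_nhdsWithin] with m hm
    exact (continuous_div_sqrt_one_sub_mul_sin_sq hm (by fun_prop)).aestronglyMeasurable
  · filter_upwards [self_mem_nhdsWithin] with m hm
    refine ae_of_all _ fun θ hθ => ?_
    rw [norm_of_nonneg (div_nonneg (by linarith [sin_le_one θ]) (sqrt_nonneg _))]
    exact one_sub_div_sqrt_one_sub_mul_sq_le_one (le_of_lt hm) (hsin θ hθ) (sin_le_one θ)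
  · exact (tendsto_one_sub_div_sqrt_one_sub_mul_sq (by linarith [hsin θ hθ]) (sin_le_one θ))
      |>.mono_left nhdsWithin_le_nhds

/-- **Logarithmic divergence of `K(m)` as `m → 1⁻`:**
`K(m) = -log √(1-m) + log 4 + o(1)`, i.e. `K(m) + log √(1-m) → log 4`. -/
theorem ellK_log_asymptotic :
    Filter.Tendsto (fun m => ellK m + Real.log (Real.sqrt (1 - m)))
      (nhdsWithin 1 (Set.Iio 1)) (nhds (Real.log 4)) := by
  have hlog4 : log 2 + log 2 = log 4 := by
    rw [← log_mul two_ne_zero two_ne_zero]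
    norm_num
  have hsum := tendsto_integral_one_sub_sin_div_sqrt.add tendsto_integral_sin_div_sqrt_add_log_sqrt
  rw [hlog4] at hsum
  refine hsum.congr' ?_
  filter_upwards [self_mem_nhdsWithin] with m hm
  rw [ellK_eq_add hm, add_assoc]
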